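/- Let (M, S̃) and (M⋆, S̃⋆) be two pairs of symmetric positive-definite maps with Schur complements S = B M⁻¹ Bᵀ, S⋆ = B M⋆⁻¹ Bᵀ, exact projections P_M = I − M⁻¹BᵀS⁻¹B, P_{M⋆} = I − M⋆⁻¹BᵀS⋆⁻¹B, and inexact projections P̃ = I − M⁻¹BᵀS̃⁻¹B, P̃⋆ = I − M⋆⁻¹BᵀS̃⋆⁻¹B. Suppose there are Θ ∈ [0, θ] and Θ̃ ∈ [0, θ̃] with M − M⋆ ≼ Θ·M⋆, M⋆ − M ≼ Θ·M, S̃⁻¹ − S̃⋆⁻¹ ≼ Θ̃·S̃⋆⁻¹, S̃⋆⁻¹ − S̃⁻¹ ≼ Θ̃·S̃⁻¹; set θm = max{θ, θ̃} and Θm = max{Θ, Θ̃}. Suppose (1 − δ)·S̃ ≼ S ≼ S̃ with δ ∈ (0,1), and that for some constant K_S ≥ 1 one has −K_S·Θm·δ·S⋆⁻¹ ≼ (S̃⁻¹ − S⁻¹) − (S̃⋆⁻¹ − S⋆⁻¹) ≼ K_S·Θm·δ·S⋆⁻¹. Then for every u ∈ V: ‖[(P̃ − P_M) − (P̃⋆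 − P_{M⋆})]u‖_M ≤ 2·√(1 + θm)·K_S·δ·Θm·‖u‖_{M⋆}. -/
import Mathlib


open scoped RealInnerProductSpace

noncomputable section

/-- Loewner order: `X ≼ Y` iff `Y - X` is positive semidefinite. -/
def LoewnerLE {E : Type*} [NormedAddCommGroup E] [InnerProductSpace ℝ E]
    (X Y : E →ₗ[ℝ] E) : Prop :=
  ∀ u : E, ⟪u, X u⟫ ≤ ⟪u, Y u⟫

/-- The `A`-norm `‖u‖_A = ⟪u, A u⟫ ^ (1/2)`. -/
def anorm {E : Type*} [NormedAddCommGroup E] [InnerProductSpace ℝ E]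
    (A : E →ₗ[ℝ] E) (u : E) : ℝ :=
  Real.sqrt ⟪u, A u⟫


section helpers

variable {E : Type*} [NormedAddCommGroup E] [InnerProductSpace ℝ E]

lemma psd_cs {A : E →ₗ[ℝ] E} (hA : A.IsSymmetric) (hpsd : ∀ v : E, 0 ≤ ⟪v, A v⟫)
    (x y : E) : ⟪x, A y⟫ ^ 2 ≤ ⟪x, A x⟫ * ⟪y, A y⟫ := by
  have hyx : ∀ p q : E, ⟪q, A p⟫ = ⟪p, A q⟫ := fun p q => by
    rw [real_inner_comm, hA]
  have key : ∀ t : ℝ, 0 ≤ ⟪y, A y⟫ * (t * t) + (2 * ⟪x, A y⟫) * t + ⟪x, A x⟫ := by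
    intro t
    have h0 := hpsd (x + t • y)
    have hexp : ⟪x + t • y, A (x + t • y)⟫ =
        ⟪x, A x⟫ + t * ⟪x, A y⟫ + t * ⟪y, A x⟫ + t ^ 2 * ⟪y, A y⟫ := by
      simp only [map_add, map_smul, inner_add_left, inner_add_right,
        real_inner_smul_left, real_inner_smul_right]
      ring
    rw [hexp, hyx x y] at h0
    nlinarith [h0]
  have hd := discrim_le_zero key
  rw [discrim] at hd
  nlinarith [hd]

lemma inv_quad_le {A Ainv C Cinv : E →ₗ[ℝ] E} (hA : A.IsSymmetric)
    (hApsd : ∀ v : E, 0 ≤ ⟪v, A v⟫) (hAinv : A ∘ₗ Ainv = LinearMap.id)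
    (hCinv : C ∘ₗ Cinv = LinearMap.id) {k : ℝ} (hk : 0 < k)
    (h : ∀ v : E, ⟪v, A v⟫ ≤ k * ⟪v, C v⟫) (z : E) :
    ⟪z, Cinv z⟫ ≤ k * ⟪z, Ainv z⟫ := by
  have hAa : ∀ q : E, A (Ainv q) = q := fun q => by
    have := LinearMap.ext_iff.mp hAinv q; simpa using this
  have hCc : ∀ q : E, C (Cinv q) = q := fun q => by
    have := LinearMap.ext_iff.mp hCinv q; simpa using this
  have var : ∀ v : E, 2 * ⟪z, v⟫ - ⟪v, A v⟫ ≤ ⟪z, Ainv z⟫ := by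
    intro v
    have h0 := hApsd (v - Ainv z)
    have hexp : ⟪v - Ainv z, A (v - Ainv z)⟫ =
        ⟪v, A v⟫ - 2 * ⟪z, v⟫ + ⟪z, Ainv z⟫ := by
      have e1 : A (v - Ainv z) = A v - z := by rw [map_sub, hAa]
      have e2 : ⟪Ainv z, A v⟫ = ⟪z, v⟫ := by
        rw [← hA (Ainv z) v, hAa]
      rw [e1]
      simp only [inner_sub_left, inner_sub_right]
      rw [e2, real_inner_comm (Ainv z) z, real_inner_comm v z]
      ring
    rw [hexp] at h0
    linarith
  have hv := var (k⁻¹ • Cinv z)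
  have hb := h (k⁻¹ • Cinv z)
  have hCq : ⟪k⁻¹ • Cinv z, C (k⁻¹ • Cinv z)⟫ = k⁻¹ * (k⁻¹ * ⟪z, Cinv z⟫) := by
    rw [map_smul, real_inner_smul_left, real_inner_smul_right, hCc,
      real_inner_comm (Cinv z) z]
  have hzv : ⟪z, k⁻¹ • Cinv z⟫ = k⁻¹ * ⟪z, Cinv z⟫ := real_inner_smul_right _ _ _
  rw [hzv] at hv
  rw [hCq] at hb
  have hk' : k ≠ 0 := ne_of_gt hk
  have hfield : k * (k⁻¹ * (k⁻¹ * ⟪z, Cinv z⟫)) = k⁻¹ * ⟪z, Cinv z⟫ := by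
    field_simp
  rw [hfield] at hb
  have h1 : k⁻¹ * ⟪z, Cinv z⟫ ≤ ⟪z, Ainv z⟫ := by linarith
  have := mul_le_mul_of_nonneg_left h1 hk.le
  calc ⟪z, Cinv z⟫ = k * (k⁻¹ * ⟪z, Cinv z⟫) := by field_simp
    _ ≤ k * ⟪z, Ainv z⟫ := this

lemma inv_symm {A Ainv : E →ₗ[ℝ] E} (hA : A.IsSymmetric)
    (h' : A ∘ₗ Ainv = LinearMap.id) : Ainv.IsSymmetric := by
  have hAa : ∀ q : E, A (Ainv q) = q := fun q => by
    have := LinearMap.ext_iff.mp h' q; simpa using this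
  intro x y
  conv_lhs => rw [← hAa y]
  rw [← hA (Ainv x) (Ainv y), hAa]

lemma inv_psd {A Ainv : E →ₗ[ℝ] E} (hpsd : ∀ v : E, 0 ≤ ⟪v, A v⟫)
    (h' : A ∘ₗ Ainv = LinearMap.id) (z : E) : 0 ≤ ⟪z, Ainv z⟫ := by
  have hAa : A (Ainv z) = z := by
    have := LinearMap.ext_iff.mp h' z; simpa using this
  calc (0:ℝ) ≤ ⟪Ainv z, A (Ainv z)⟫ := hpsd _
    _ = ⟪z, Ainv z⟫ := by rw [hAa, real_inner_comm]

lemma core_bound {A T : E →ₗ[ℝ] E} (hA : A.IsSymmetric)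
    (hApsd : ∀ v : E, 0 ≤ ⟪v, A v⟫) (hAT : (A ∘ₗ T).IsSymmetric)
    {γ : ℝ} (hγ : 0 ≤ γ) (hb : ∀ v : E, |⟪v, A (T v)⟫| ≤ γ * ⟪v, A v⟫) (w : E) :
    ⟪T w, A (T w)⟫ ≤ γ ^ 2 * ⟪w, A w⟫ := by
  have hyx : ∀ p q : E, ⟪q, A p⟫ = ⟪p, A q⟫ := fun p q => by
    rw [real_inner_comm, hA]
  have bsym : ∀ p q : E, ⟪q, A (T p)⟫ = ⟪p, A (T q)⟫ := by
    intro p q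
    have h1 := hAT p q
    simp only [LinearMap.comp_apply] at h1
    rw [real_inner_comm, h1]
  have key : ∀ p q : E, ⟪p, A (T q)⟫ ≤ γ / 2 * (⟪p, A p⟫ + ⟪q, A q⟫) := by
    intro p q
    have h1 := (abs_le.mp (hb (p + q))).2
    have h2 := (abs_le.mp (hb (p - q))).1
    have e1 : ⟪p + q, A (T (p + q))⟫ =
        ⟪p, A (T p)⟫ + ⟪p, A (T q)⟫ + ⟪q, A (T p)⟫ + ⟪q, A (T q)⟫ := by
      simp only [map_add, inner_add_left, inner_add_right]
      ring
    have e2 : ⟪p - q, A (T (p - q))⟫ =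
        ⟪p, A (T p)⟫ - ⟪p, A (T q)⟫ - ⟪q, A (T p)⟫ + ⟪q, A (T q)⟫ := by
      simp only [map_sub, inner_sub_left, inner_sub_right]
      ring
    have e3 : ⟪p + q, A (p + q)⟫ = ⟪p, A p⟫ + 2 * ⟪p, A q⟫ + ⟪q, A q⟫ := by
      simp only [map_add, inner_add_left, inner_add_right]
      rw [hyx q p]
      ring
    have e4 : ⟪p - q, A (p - q)⟫ = ⟪p, A p⟫ - 2 * ⟪p, A q⟫ + ⟪q, A q⟫ := by
      simp only [map_sub, inner_sub_left, inner_sub_right]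
      rw [hyx q p]
      ring
    rw [e1, e3] at h1
    rw [e2, e4] at h2
    have hb2 := bsym p q
    nlinarith [h1, h2]
  have hs0 : 0 ≤ ⟪T w, A (T w)⟫ := hApsd _
  have hswap : ⟪w, A (T (T w))⟫ = ⟪T w, A (T w)⟫ := bsym (T w) w
  set s := ⟪T w, A (T w)⟫ with hs
  have hquad : ∀ x : ℝ, 0 ≤ γ * ⟪w, A w⟫ / 2 * (x * x) + (-s) * x + γ * s / 2 := by
    intro x
    rcases le_or_gt x 0 with hx | hx
    · have hqw := hApsd w
      nlinarith [mul_nonneg hs0 (neg_nonneg.mpr hx),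
        mul_nonneg (mul_nonneg hγ hqw) (mul_self_nonneg x), mul_nonneg hγ hs0]
    · have ht : (0:ℝ) < Real.sqrt x := Real.sqrt_pos.mpr hx
      have ht2 : Real.sqrt x * Real.sqrt x = x := Real.mul_self_sqrt hx.le
      set t := Real.sqrt x with htt
      have hscale : ⟪t • w, A (T (t⁻¹ • T w))⟫ = s := by
        rw [map_smul, map_smul, real_inner_smul_left, real_inner_smul_right, hswap]
        field_simp
      have hk := key (t • w) (t⁻¹ • T w)
      rw [hscale] at hk
      have e1 : ⟪t • w, A (t • w)⟫ = x * ⟪w, A w⟫ := by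
        rw [map_smul, real_inner_smul_left, real_inner_smul_right, ← ht2]
        ring
      have e2 : ⟪t⁻¹ • T w, A (t⁻¹ • T w)⟫ = x⁻¹ * s := by
        rw [map_smul, real_inner_smul_left, real_inner_smul_right, ← hs, ← ht2]
        rw [mul_inv]
        ring
      rw [e1, e2] at hk
      have hmul := mul_le_mul_of_nonneg_left hk hx.le
      have hre : x * (γ / 2 * (x * ⟪w, A w⟫ + x⁻¹ * s)) =
          γ / 2 * (x * x * ⟪w, A w⟫) + γ / 2 * s := by
        field_simp
      rw [hre] at hmul
      nlinarith [hmul]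
  have hd := discrim_le_zero hquad
  rw [discrim] at hd
  rcases hs0.eq_or_lt with h | h
  · rw [← h]
    exact mul_nonneg (sq_nonneg γ) (hApsd w)
  · nlinarith [hd, h]

lemma sqrt_add_le {A : E →ₗ[ℝ] E} (hA : A.IsSymmetric)
    (hpsd : ∀ v : E, 0 ≤ ⟪v, A v⟫) {x y : E} {a : ℝ} (ha : 0 ≤ a)
    (hx : ⟪x, A x⟫ ≤ a ^ 2) (hy : ⟪y, A y⟫ ≤ a ^ 2) :
    Real.sqrt ⟪x + y, A (x + y)⟫ ≤ 2 * a := by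
  have hcs := psd_cs hA hpsd x y
  have hq : ⟪x, A x⟫ * ⟪y, A y⟫ ≤ a ^ 2 * a ^ 2 :=
    mul_le_mul hx hy (hpsd y) (sq_nonneg a)
  have hxy : ⟪x, A y⟫ ≤ a ^ 2 := by
    rcases le_or_gt ⟪x, A y⟫ 0 with h | h
    · exact le_trans h (sq_nonneg a)
    · nlinarith [hcs, hq, h]
  have hexp : ⟪x + y, A (x + y)⟫ ≤ (2 * a) ^ 2 := by
    have hyx : ⟪y, A x⟫ = ⟪x, A y⟫ := by rw [real_inner_comm, hA]
    have e : ⟪x + y, A (x + y)⟫ = ⟪x, A x⟫ + 2 * ⟪x, A y⟫ + ⟪y, A y⟫ := by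
      simp only [map_add, inner_add_left, inner_add_right]
      rw [hyx]; ring
    rw [e]; nlinarith
  calc Real.sqrt ⟪x + y, A (x + y)⟫ ≤ Real.sqrt ((2 * a) ^ 2) :=
        Real.sqrt_le_sqrt hexp
    _ = 2 * a := Real.sqrt_sq (by positivity)

end helpers

section twospace

variable {V W : Type*} [NormedAddCommGroup V] [InnerProductSpace ℝ V]
  [FiniteDimensional ℝ V] [NormedAddCommGroup W] [InnerProductSpace ℝ W]
  [FiniteDimensional ℝ W]

lemma constr_symm (B : V →ₗ[ℝ] W) {Mi : V →ₗ[ℝ] V} (hMi : Mi.IsSymmetric) :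
    (B ∘ₗ Mi ∘ₗ LinearMap.adjoint B).IsSymmetric := by
  intro x y
  simp only [LinearMap.comp_apply]
  rw [← LinearMap.adjoint_inner_right, hMi, LinearMap.adjoint_inner_left]

lemma constr_psd (B : V →ₗ[ℝ] W) {Mi : V →ₗ[ℝ] V}
    (hMi : ∀ v : V, 0 ≤ ⟪v, Mi v⟫) (w : W) :
    0 ≤ ⟪w, (B ∘ₗ Mi ∘ₗ LinearMap.adjoint B) w⟫ := by
  simp only [LinearMap.comp_apply]
  rw [← LinearMap.adjoint_inner_left]
  exact hMi _

lemma quad_eq (B : V →ₗ[ℝ] W) {Mi Miinv : V →ₗ[ℝ] V} {Ss : W →ₗ[ℝ] W}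
    (hinv' : Mi ∘ₗ Miinv = LinearMap.id)
    (hSs : Ss = B ∘ₗ Miinv ∘ₗ LinearMap.adjoint B) (x : W) :
    ⟪Miinv (LinearMap.adjoint B x), Mi (Miinv (LinearMap.adjoint B x))⟫
      = ⟪x, Ss x⟫ := by
  have hMm : Mi (Miinv (LinearMap.adjoint B x)) = LinearMap.adjoint B x := by
    have := LinearMap.ext_iff.mp hinv' (LinearMap.adjoint B x); simpa using this
  rw [hMm, real_inner_comm, LinearMap.adjoint_inner_left, hSs]
  simp only [LinearMap.comp_apply]

lemma schur_quad_le (B : V →ₗ[ℝ] W) {Mh Mhinv : V →ₗ[ℝ] V}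
    (hsym : Mh.IsSymmetric) (hpsd : ∀ v : V, 0 ≤ ⟪v, Mh v⟫)
    (hinv' : Mh ∘ₗ Mhinv = LinearMap.id)
    {Ss Ssinv : W →ₗ[ℝ] W} (hSs : Ss = B ∘ₗ Mhinv ∘ₗ LinearMap.adjoint B)
    (hSsinv' : Ss ∘ₗ Ssinv = LinearMap.id) (u : V) :
    ⟪B u, Ssinv (B u)⟫ ≤ ⟪u, Mh u⟫ := by
  set w := B u with hw
  set q := Mhinv (LinearMap.adjoint B (Ssinv w)) with hq
  have hMq : Mh q = LinearMap.adjoint B (Ssinv w) := by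
    rw [hq]
    have := LinearMap.ext_iff.mp hinv' (LinearMap.adjoint B (Ssinv w))
    simpa using this
  have hBq : B q = w := by
    have := LinearMap.ext_iff.mp hSsinv' w
    rw [hSs] at this
    simpa [LinearMap.comp_apply] using this
  have e1 : ⟪u, Mh q⟫ = ⟪w, Ssinv w⟫ := by
    rw [hMq, LinearMap.adjoint_inner_right]
  have e2 : ⟪q, Mh u⟫ = ⟪w, Ssinv w⟫ := by
    rw [← hsym q u, hMq, LinearMap.adjoint_inner_left, ← hw, real_inner_comm]
  have e3 : ⟪q, Mh q⟫ = ⟪w, Ssinv w⟫ := by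
    rw [hMq, LinearMap.adjoint_inner_right, hBq]
  have h0 := hpsd (u - q)
  have hexp : ⟪u - q, Mh (u - q)⟫ =
      ⟪u, Mh u⟫ - ⟪u, Mh q⟫ - ⟪q, Mh u⟫ + ⟪q, Mh q⟫ := by
    simp only [map_sub, inner_sub_left, inner_sub_right]
    ring
  rw [hexp, e1, e2, e3] at h0
  linarith

end twospace
set_option maxHeartbeats 1000000 in
theorem stmt14 {V W : Type*}
    [NormedAddCommGroup V] [InnerProductSpace ℝ V] [FiniteDimensional ℝ V]
    [NormedAddCommGroup W] [InnerProductSpace ℝ W] [FiniteDimensional ℝ W]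
    (B : V →ₗ[ℝ] W) (hB : Function.Surjective B)
    (M Minv Mstar Mstarinv : V →ₗ[ℝ] V)
    (hMsym : M.IsSymmetric) (hMpos : ∀ u : V, u ≠ 0 → 0 < ⟪u, M u⟫)
    (hMinv : Minv ∘ₗ M = LinearMap.id) (hMinv' : M ∘ₗ Minv = LinearMap.id)
    (hMstarsym : Mstar.IsSymmetric) (hMstarpos : ∀ u : V, u ≠ 0 → 0 < ⟪u, Mstar u⟫)
    (hMstarinv : Mstarinv ∘ₗ Mstar = LinearMap.id)
    (hMstarinv' : Mstar ∘ₗ Mstarinv = LinearMap.id)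
    (St Stinv Ststar Ststarinv : W →ₗ[ℝ] W)
    (hStsym : St.IsSymmetric) (hStpos : ∀ w : W, w ≠ 0 → 0 < ⟪w, St w⟫)
    (hStinv : Stinv ∘ₗ St = LinearMap.id) (hStinv' : St ∘ₗ Stinv = LinearMap.id)
    (hStstarsym : Ststar.IsSymmetric) (hStstarpos : ∀ w : W, w ≠ 0 → 0 < ⟪w, Ststar w⟫)
    (hStstarinv : Ststarinv ∘ₗ Ststar = LinearMap.id)
    (hStstarinv' : Ststar ∘ₗ Ststarinv = LinearMap.id)
    (S Sinv Sstar Sstarinv : W →ₗ[ℝ] W)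
    (hS : S = B ∘ₗ Minv ∘ₗ LinearMap.adjoint B)
    (hSinv : Sinv ∘ₗ S = LinearMap.id) (hSinv' : S ∘ₗ Sinv = LinearMap.id)
    (hSstar : Sstar = B ∘ₗ Mstarinv ∘ₗ LinearMap.adjoint B)
    (hSstarinv : Sstarinv ∘ₗ Sstar = LinearMap.id)
    (hSstarinv' : Sstar ∘ₗ Sstarinv = LinearMap.id)
    (PM PMstar Pt Ptstar : V →ₗ[ℝ] V)
    (hPM : PM = LinearMap.id - Minv ∘ₗ LinearMap.adjoint B ∘ₗ Sinv ∘ₗ B)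
    (hPMstar : PMstar = LinearMap.id - Mstarinv ∘ₗ LinearMap.adjoint B ∘ₗ Sstarinv ∘ₗ B)
    (hPt : Pt = LinearMap.id - Minv ∘ₗ LinearMap.adjoint B ∘ₗ Stinv ∘ₗ B)
    (hPtstar : Ptstar = LinearMap.id - Mstarinv ∘ₗ LinearMap.adjoint B ∘ₗ Ststarinv ∘ₗ B)
    (Θ Θt θ θt : ℝ)
    (hΘ0 : 0 ≤ Θ) (hΘθ : Θ ≤ θ) (hΘt0 : 0 ≤ Θt) (hΘtθ : Θt ≤ θt)
    (hH1a : LoewnerLE (M - Mstar) (Θ • Mstar))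
    (hH1b : LoewnerLE (Mstar - M) (Θ • M))
    (hH1c : LoewnerLE (Stinv - Ststarinv) (Θt • Ststarinv))
    (hH1d : LoewnerLE (Ststarinv - Stinv) (Θt • Stinv))
    (δ : ℝ) (hδ0 : 0 < δ) (hδ1 : δ < 1)
    (hH2a : LoewnerLE ((1 - δ) • St) S) (hH2b : LoewnerLE S St)
    (KS : ℝ) (hKS : 1 ≤ KS)
    (hH3a : LoewnerLE ((-(KS * max Θ Θt * δ)) • Sstarinv)
      ((Stinv - Sinv) - (Ststarinv - Sstarinv)))
    (hH3b : LoewnerLE ((Stinv - Sinv) - (Ststarinv - Sstarinv))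
      ((KS * max Θ Θt * δ) • Sstarinv))
    (u : V) :
    anorm M (((Pt - PM) - (Ptstar - PMstar)) u) ≤
      2 * Real.sqrt (1 + max θ θt) * KS * δ * max Θ Θt * anorm Mstar u := by
  have hMpsd : ∀ v : V, 0 ≤ ⟪v, M v⟫ := by
    intro v; rcases eq_or_ne v 0 with h | h
    · simp [h]
    · exact (hMpos v h).le
  have hMstarpsd : ∀ v : V, 0 ≤ ⟪v, Mstar v⟫ := by
    intro v; rcases eq_or_ne v 0 with h | h
    · simp [h]
    · exact (hMstarpos v h).le
  have hStpsd : ∀ v : W, 0 ≤ ⟪v, St v⟫ := by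
    intro v; rcases eq_or_ne v 0 with h | h
    · simp [h]
    · exact (hStpos v h).le
  have hMinvsym := inv_symm hMsym hMinv'
  have hMstarinvsym := inv_symm hMstarsym hMstarinv'
  have hStinvsym := inv_symm hStsym hStinv'
  have hStstarinvsym := inv_symm hStstarsym hStstarinv'
  have hSsym : S.IsSymmetric := by rw [hS]; exact constr_symm B hMinvsym
  have hSstarsym : Sstar.IsSymmetric := by rw [hSstar]; exact constr_symm B hMstarinvsym
  have hMinvpsd : ∀ z : V, 0 ≤ ⟪z, Minv z⟫ := fun z => inv_psd hMpsd hMinv' z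
  have hMstarinvpsd : ∀ z : V, 0 ≤ ⟪z, Mstarinv z⟫ := fun z => inv_psd hMstarpsd hMstarinv' z
  have hSpsd : ∀ z : W, 0 ≤ ⟪z, S z⟫ := fun z => by
    rw [hS]; exact constr_psd B hMinvpsd z
  have hSstarpsd : ∀ z : W, 0 ≤ ⟪z, Sstar z⟫ := fun z => by
    rw [hSstar]; exact constr_psd B hMstarinvpsd z
  have hSinvsym := inv_symm hSsym hSinv'
  have hSstarinvsym := inv_symm hSstarsym hSstarinv'
  have hSinvpsd : ∀ z : W, 0 ≤ ⟪z, Sinv z⟫ := fun z => inv_psd hSpsd hSinv' z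
  have hSstarinvpsd : ∀ z : W, 0 ≤ ⟪z, Sstarinv z⟫ := fun z => inv_psd hSstarpsd hSstarinv' z
  -- scalar facts
  have hΘm0 : 0 ≤ max Θ Θt := le_trans hΘ0 (le_max_left _ _)
  have hΘm : Θ ≤ max Θ Θt := le_max_left _ _
  have hθm : Θ ≤ max θ θt := le_trans hΘθ (le_max_left _ _)
  have hKS0 : (0:ℝ) < KS := lt_of_lt_of_le one_pos hKS
  have hc0 : 0 ≤ KS * max Θ Θt * δ := mul_nonneg (mul_nonneg hKS0.le hΘm0) hδ0.le
  have hδ' : (0:ℝ) < 1 - δ := by linarith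
  -- inverse quadratic comparisons
  have invM1 : ∀ z : V, ⟪z, Mstarinv z⟫ ≤ (1 + Θ) * ⟪z, Minv z⟫ := by
    intro z
    refine inv_quad_le hMsym hMpsd hMinv' hMstarinv' (by linarith) ?_ z
    intro v
    have h1 := hH1a v
    simp only [LinearMap.sub_apply, LinearMap.smul_apply, inner_sub_right] at h1
    rw [real_inner_smul_right] at h1
    linarith
  have invM2 : ∀ z : V, ⟪z, Minv z⟫ ≤ (1 + Θ) * ⟪z, Mstarinv z⟫ := by
    intro z
    refine inv_quad_le hMstarsym hMstarpsd hMstarinv' hMinv' (by linarith) ?_ z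
    intro v
    have h1 := hH1b v
    simp only [LinearMap.sub_apply, LinearMap.smul_apply, inner_sub_right] at h1
    rw [real_inner_smul_right] at h1
    linarith
  have invS1 : ∀ z : W, ⟪z, Stinv z⟫ ≤ ⟪z, Sinv z⟫ := by
    intro z
    have h := inv_quad_le (k := 1) hSsym hSpsd hSinv' hStinv' one_pos
      (fun v => by rw [one_mul]; exact hH2b v) z
    rwa [one_mul] at h
  have invS2 : ∀ z : W, ⟪z, Sinv z⟫ ≤ (1 - δ)⁻¹ * ⟪z, Stinv z⟫ := by
    intro z
    refine inv_quad_le hStsym hStpsd hStinv' hSinv' (inv_pos.mpr hδ') ?_ z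
    intro v
    have h1 := hH2a v
    simp only [LinearMap.smul_apply] at h1
    rw [real_inner_smul_right] at h1
    have h2 := mul_le_mul_of_nonneg_left h1 (inv_nonneg.mpr hδ'.le)
    calc ⟪v, St v⟫ = (1 - δ)⁻¹ * ((1 - δ) * ⟪v, St v⟫) := by field_simp
      _ ≤ (1 - δ)⁻¹ * ⟪v, S v⟫ := h2
  -- identities for the inverses
  have hMidv : ∀ z : V, M (Minv z) = z := fun z => by
    have := LinearMap.ext_iff.mp hMinv' z; simpa using this
  have hMidv2 : ∀ z : V, Minv (M z) = z := fun z => by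
    have := LinearMap.ext_iff.mp hMinv z; simpa using this
  have hSid : ∀ z : W, Sstarinv (Sstar z) = z := fun z => by
    have := LinearMap.ext_iff.mp hSstarinv z; simpa using this
  have hSid' : ∀ z : W, Sstar (Sstarinv z) = z := fun z => by
    have := LinearMap.ext_iff.mp hSstarinv' z; simpa using this
  have hSidv : ∀ z : W, Sinv (S z) = z := fun z => by
    have := LinearMap.ext_iff.mp hSinv z; simpa using this
  have hSidv' : ∀ z : W, S (Sinv z) = z := fun z => by
    have := LinearMap.ext_iff.mp hSinv' z; simpa using this
  -- the vectors
  set w := B u with hw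
  set g := Sinv w - Stinv w with hg
  set x := g - (Sstarinv w - Ststarinv w) with hx
  set y1 := Mstarinv (LinearMap.adjoint B x) with hy1
  set p := Minv (LinearMap.adjoint B g) with hp
  set y2 := p - Mstarinv (M p) with hy2
  have hDu : ((Pt - PM) - (Ptstar - PMstar)) u = y1 + y2 := by
    rw [hPt, hPM, hPtstar, hPMstar, hy1, hy2, hp, hx, hg]
    simp only [LinearMap.sub_apply, LinearMap.comp_apply, LinearMap.id_apply,
      map_sub, hMidv, ← hw]
    abel
  -- term 1 estimates
  have hq1 : ⟪y1, M y1⟫ ≤ (1 + Θ) * ⟪y1, Mstar y1⟫ := by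
    have h1 := hH1a y1
    simp only [LinearMap.sub_apply, LinearMap.smul_apply, inner_sub_right] at h1
    rw [real_inner_smul_right] at h1
    linarith
  have hq9 : ⟪u, M u⟫ ≤ (1 + Θ) * ⟪u, Mstar u⟫ := by
    have h1 := hH1a u
    simp only [LinearMap.sub_apply, LinearMap.smul_apply, inner_sub_right] at h1
    rw [real_inner_smul_right] at h1
    linarith
  have hq2 : ⟪y1, Mstar y1⟫ = ⟪x, Sstar x⟫ := by
    rw [hy1]; exact quad_eq B hMstarinv' hSstar x
  have hq3 : ⟪x, Sstar x⟫ ≤ (KS * max Θ Θt * δ) ^ 2 * ⟪w, Sstarinv w⟫ := by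
    have hXsym : ((Sinv - Stinv) - (Sstarinv - Ststarinv)).IsSymmetric :=
      (hSinvsym.sub hStinvsym).sub (hSstarinvsym.sub hStstarinvsym)
    have hAT : (Sstar ∘ₗ (((Sinv - Stinv) - (Sstarinv - Ststarinv)) ∘ₗ Sstar)).IsSymmetric := by
      intro a b
      simp only [LinearMap.comp_apply]
      rw [hSstarsym, hXsym, hSstarsym]
    have hbound : ∀ v : W,
        |⟪v, Sstar ((((Sinv - Stinv) - (Sstarinv - Ststarinv)) ∘ₗ Sstar) v)⟫| ≤
          KS * max Θ Θt * δ * ⟪v, Sstar v⟫ := by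
      intro v
      have eS : ⟪Sstar v, Sstarinv (Sstar v)⟫ = ⟪v, Sstar v⟫ := by
        rw [hSid v, real_inner_comm]
      have h3a := hH3a (Sstar v)
      have h3b := hH3b (Sstar v)
      simp only [LinearMap.sub_apply, LinearMap.smul_apply, inner_sub_right,
        real_inner_smul_right, eS] at h3a h3b
      have e : ⟪v, Sstar ((((Sinv - Stinv) - (Sstarinv - Ststarinv)) ∘ₗ Sstar) v)⟫
          = (⟪Sstar v, Sinv (Sstar v)⟫ - ⟪Sstar v, Stinv (Sstar v)⟫)
            - (⟪Sstar v, Sstarinv (Sstar v)⟫ - ⟪Sstar v, Ststarinv (Sstar v)⟫) := by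
        simp only [LinearMap.comp_apply]
        rw [← hSstarsym v]
        simp only [LinearMap.sub_apply, inner_sub_right]
      rw [e, eS, abs_le]
      constructor <;> linarith
    have hcore := core_bound hSstarsym hSstarpsd hAT hc0 hbound (Sstarinv w)
    have hTy : (((Sinv - Stinv) - (Sstarinv - Ststarinv)) ∘ₗ Sstar) (Sstarinv w) = x := by
      rw [hx, hg]
      simp only [LinearMap.comp_apply, hSid', LinearMap.sub_apply]
    have hyS : ⟪Sstarinv w, Sstar (Sstarinv w)⟫ = ⟪w, Sstarinv w⟫ := by
      rw [hSid' w, real_inner_comm]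
    rw [hTy, hyS] at hcore
    exact hcore
  have hq4 : ⟪w, Sstarinv w⟫ ≤ ⟪u, Mstar u⟫ :=
    schur_quad_le B hMstarsym hMstarpsd hMstarinv' hSstar hSstarinv' u
  -- term 2 estimates
  have hq5 : ⟪y2, M y2⟫ ≤ Θ ^ 2 * ⟪p, M p⟫ := by
    have hAT : (M ∘ₗ ((LinearMap.id : V →ₗ[ℝ] V) - Mstarinv ∘ₗ M)).IsSymmetric := by
      intro a b
      simp only [LinearMap.comp_apply, LinearMap.sub_apply, LinearMap.id_apply, map_sub,
        inner_sub_left, inner_sub_right]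
      rw [hMsym a b]
      have h2 : ⟪M (Mstarinv (M a)), b⟫ = ⟪a, M (Mstarinv (M b))⟫ := by
        rw [hMsym, hMstarinvsym, hMsym]
      rw [h2]
    have hbound : ∀ v : V, |⟪v, M (((LinearMap.id : V →ₗ[ℝ] V) - Mstarinv ∘ₗ M) v)⟫| ≤ Θ * ⟪v, M v⟫ := by
      intro v
      have e : ⟪v, M (((LinearMap.id : V →ₗ[ℝ] V) - Mstarinv ∘ₗ M) v)⟫
          = ⟪v, M v⟫ - ⟪M v, Mstarinv (M v)⟫ := by
        simp only [LinearMap.sub_apply, LinearMap.id_apply, LinearMap.comp_apply, map_sub,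
          inner_sub_right]
        rw [← hMsym v (Mstarinv (M v))]
      have eq1 : ⟪M v, Minv (M v)⟫ = ⟪v, M v⟫ := by
        rw [hMidv2 v, real_inner_comm]
      have i1 := invM1 (M v)
      have i2 := invM2 (M v)
      rw [eq1] at i1 i2
      have hm0 := hMstarinvpsd (M v)
      have hq0 := hMpsd v
      rw [e, abs_le]
      constructor
      · linarith
      · nlinarith [i2, hm0, hq0, mul_nonneg (mul_nonneg hΘ0 hΘ0) hq0]
    have hcore := core_bound hMsym hMpsd hAT hΘ0 hbound p
    have hTp : ((LinearMap.id : V →ₗ[ℝ] V) - Mstarinv ∘ₗ M) p = y2 := by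
      rw [hy2]
      simp only [LinearMap.sub_apply, LinearMap.id_apply, LinearMap.comp_apply]
    rw [hTp] at hcore
    exact hcore
  have hq6 : ⟪p, M p⟫ = ⟪g, S g⟫ := by
    rw [hp]; exact quad_eq B hMinv' hS g
  have hq7 : ⟪g, S g⟫ ≤ δ ^ 2 * ⟪w, Sinv w⟫ := by
    have hGsym : (Sinv - Stinv).IsSymmetric := hSinvsym.sub hStinvsym
    have hAT : (S ∘ₗ ((Sinv - Stinv) ∘ₗ S)).IsSymmetric := by
      intro a b
      simp only [LinearMap.comp_apply]
      rw [hSsym, hGsym, hSsym]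
    have hbound : ∀ v : W, |⟪v, S (((Sinv - Stinv) ∘ₗ S) v)⟫| ≤ δ * ⟪v, S v⟫ := by
      intro v
      have eS : ⟪S v, Sinv (S v)⟫ = ⟪v, S v⟫ := by
        rw [hSidv v, real_inner_comm]
      have e : ⟪v, S (((Sinv - Stinv) ∘ₗ S) v)⟫
          = ⟪S v, Sinv (S v)⟫ - ⟪S v, Stinv (S v)⟫ := by
        simp only [LinearMap.comp_apply]
        rw [← hSsym v]
        simp only [LinearMap.sub_apply, inner_sub_right]
      have i1 := invS1 (S v)
      have i2 := invS2 (S v)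
      rw [eS] at i2
      have hst0 := inv_psd hStpsd hStinv' (S v)
      have hq0 := hSpsd v
      rw [e, eS, abs_le]
      refine ⟨by nlinarith [i1, eS], ?_⟩
      have h2 := mul_le_mul_of_nonneg_left i2 hδ'.le
      rw [← mul_assoc] at h2
      rw [mul_inv_cancel₀ (ne_of_gt hδ'), one_mul] at h2
      linarith
    have hcore := core_bound hSsym hSpsd hAT hδ0.le hbound (Sinv w)
    have hTy : ((Sinv - Stinv) ∘ₗ S) (Sinv w) = g := by
      rw [hg]
      simp only [LinearMap.comp_apply, hSidv', LinearMap.sub_apply]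
    have hyS : ⟪Sinv w, S (Sinv w)⟫ = ⟪w, Sinv w⟫ := by
      rw [hSidv' w, real_inner_comm]
    rw [hTy, hyS] at hcore
    exact hcore
  have hq8 : ⟪w, Sinv w⟫ ≤ ⟪u, M u⟫ :=
    schur_quad_le B hMsym hMpsd hMinv' hS hSinv' u
  -- final assembly
  have hR0 : 0 ≤ ⟪u, Mstar u⟫ := hMstarpsd u
  have h1θ : (0:ℝ) ≤ 1 + max θ θt := by linarith
  set a := Real.sqrt (1 + max θ θt) * (KS * max Θ Θt * δ) * Real.sqrt ⟪u, Mstar u⟫ with ha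
  have ha0 : 0 ≤ a := mul_nonneg (mul_nonneg (Real.sqrt_nonneg _) hc0) (Real.sqrt_nonneg _)
  have ha2 : a ^ 2 = (1 + max θ θt) * ((KS * max Θ Θt * δ) ^ 2 * ⟪u, Mstar u⟫) := by
    rw [ha, mul_pow, mul_pow, Real.sq_sqrt h1θ, Real.sq_sqrt hR0]
    ring
  have hby1 : ⟪y1, M y1⟫ ≤ a ^ 2 := by
    have s1 : ⟪x, Sstar x⟫ ≤ (KS * max Θ Θt * δ) ^ 2 * ⟪u, Mstar u⟫ :=
      le_trans hq3 (mul_le_mul_of_nonneg_left hq4 (sq_nonneg _))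
    calc ⟪y1, M y1⟫ ≤ (1 + Θ) * ⟪y1, Mstar y1⟫ := hq1
      _ = (1 + Θ) * ⟪x, Sstar x⟫ := by rw [hq2]
      _ ≤ (1 + max θ θt) * ((KS * max Θ Θt * δ) ^ 2 * ⟪u, Mstar u⟫) :=
          mul_le_mul (by linarith) s1 (hSstarpsd x) h1θ
      _ = a ^ 2 := ha2.symm
  have hby2 : ⟪y2, M y2⟫ ≤ a ^ 2 := by
    have s1 : ⟪g, S g⟫ ≤ δ ^ 2 * ((1 + Θ) * ⟪u, Mstar u⟫) :=
      le_trans hq7 (mul_le_mul_of_nonneg_left (le_trans hq8 hq9) (sq_nonneg _))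
    have s2 : ⟪y2, M y2⟫ ≤ Θ ^ 2 * (δ ^ 2 * ((1 + Θ) * ⟪u, Mstar u⟫)) := by
      refine le_trans hq5 ?_
      rw [hq6]
      exact mul_le_mul_of_nonneg_left s1 (sq_nonneg _)
    refine le_trans s2 ?_
    rw [ha2]
    have e1 : Θ ^ 2 ≤ (max Θ Θt) ^ 2 := by nlinarith [hΘm, hΘ0]
    have e3 : (1:ℝ) ≤ KS ^ 2 := by nlinarith [hKS]
    have k1 : Θ ^ 2 * (1 + Θ) ≤ (max Θ Θt) ^ 2 * (1 + max θ θt) :=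
      mul_le_mul e1 (by linarith) (by linarith) (sq_nonneg _)
    have k2 := mul_le_mul_of_nonneg_right e3
      (mul_nonneg (sq_nonneg (max Θ Θt)) h1θ)
    rw [one_mul] at k2
    have k3 : Θ ^ 2 * (1 + Θ) ≤ KS ^ 2 * ((max Θ Θt) ^ 2 * (1 + max θ θt)) :=
      le_trans k1 k2
    have k4 := mul_le_mul_of_nonneg_right k3 (mul_nonneg (sq_nonneg δ) hR0)
    nlinarith [k4]
  have hfinal := sqrt_add_le hMsym hMpsd ha0 hby1 hby2
  rw [hDu]
  unfold anorm
  calc Real.sqrt ⟪y1 + y2, M (y1 + y2)⟫ ≤ 2 * a := hfinal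
    _ = 2 * Real.sqrt (1 + max θ θt) * KS * δ * max Θ Θt * Real.sqrt ⟪u, Mstar u⟫ := by
        rw [ha]; ring
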